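/- arXiv:2205.14604 — 4 statements merged into one kernel-verified Lean document; each statement's English description precedes it below -/
import Mathlib

section
/- Let φ : ℕ → (0,∞) satisfy φ(n)/n → ∞ as n → ∞ and limsup_{n→∞} (log φ(n))/n = log B with 1 ≤ B < ∞, and let ε > 0. For j, k ≥ 1 define c_{j,k} = exp(φ(k)) if 1 ≤ k ≤ j and c_{j,k} = exp(φ(k)·(B+ε)^{j−k}) if k ≥ j+1, and set L_j = sup_{k≥1} c_{j,k}. Then: (i) L_j is finite for every j; (ii) L_j ≤ L_{j+1} ≤ L_j^{B+ε} for all j ≥ 1; (iii) L_j ≥ exp(φ(j)) for all j ≥ 1; and (iv) liminf_{n→∞} (log L_n)/φ(n) = 1. -/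
/-!
Write `θ = B + ε` and `Λ j = log L j`, the supremum over `k ≥ 1` of the exponents of `c j k`.
Since `θ > B`, the limsup hypothesis bounds `ψ k = φ k / θ ^ k`, and every exponent at level `j` is
at most `θ ^ j * sup ψ`; this gives (i), and (ii), (iii) compare exponents term by term.
For (iv), `Λ n ≥ φ n`. If `Λ n > (1 + η) φ n` for all large `n`, the index `k` realising this has
both `φ k > (1 + η) φ n` and `ψ k > (1 + η) ψ n`; iterating from a large value of `φ` would make
`ψ` unbounded.
-/

open Filter Real Set

noncomputable section

/-- The exponent of `c j k` for `k ≥ 1`: `φ k` for `k ≤ j` and `φ k * θ ^ (j - k)` for `k > j`. -/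
def weight (φ : ℕ → ℝ) (θ : ℝ) (j k : ℕ) : ℝ := φ k * θ ^ min ((j : ℤ) - k) 0

def logSup (φ : ℕ → ℝ) (θ : ℝ) (j : ℕ) : ℝ := sSup (weight φ θ j '' Ici 1)

end

section Weight

variable {φ : ℕ → ℝ} {θ : ℝ} {j k : ℕ}

lemma weight_self (j : ℕ) : weight φ θ j j = φ j := by
  simp [weight]

lemma weight_le_self (hφ : 0 ≤ φ k) (hθ : 1 ≤ θ) : weight φ θ j k ≤ φ k :=
  mul_le_of_le_one_right hφ (zpow_le_one_of_nonpos₀ hθ (min_le_right _ _))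

lemma weight_le_pow_mul (hφ : 0 ≤ φ k) (hθ : 1 ≤ θ) :
    weight φ θ j k ≤ θ ^ j * (φ k / θ ^ k) := by
  have hθ0 : θ ≠ 0 := (zero_lt_one.trans_le hθ).ne'
  calc weight φ θ j k ≤ φ k * θ ^ ((j : ℤ) - k) :=
        mul_le_mul_of_nonneg_left (zpow_le_zpow_right₀ hθ (min_le_left _ _)) hφ
    _ = θ ^ j * (φ k / θ ^ k) := by
        rw [zpow_sub₀ hθ0, zpow_natCast, zpow_natCast]; ring

lemma weight_le_weight_succ (hφ : 0 ≤ φ k) (hθ : 1 ≤ θ) :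
    weight φ θ j k ≤ weight φ θ (j + 1) k :=
  mul_le_mul_of_nonneg_left (zpow_le_zpow_right₀ hθ (by push_cast; omega)) hφ

lemma weight_succ_le (hφ : 0 ≤ φ k) (hθ : 1 ≤ θ) :
    weight φ θ (j + 1) k ≤ θ * weight φ θ j k := by
  have hθ0 : θ ≠ 0 := (zero_lt_one.trans_le hθ).ne'
  calc weight φ θ (j + 1) k ≤ φ k * θ ^ (min ((j : ℤ) - k) 0 + 1) :=
        mul_le_mul_of_nonneg_left (zpow_le_zpow_right₀ hθ (by push_cast; omega)) hφ
    _ = θ * weight φ θ j k := by rw [weight, zpow_add_one₀ hθ0]; ring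

lemma lt_and_lt_of_mul_lt_weight {r : ℝ} {n : ℕ} (hφ : 0 ≤ φ k) (hθ : 1 ≤ θ)
    (h : r * φ n < weight φ θ n k) : r * φ n < φ k ∧ r * (φ n / θ ^ n) < φ k / θ ^ k := by
  have hθn : 0 < θ ^ n := pow_pos (zero_lt_one.trans_le hθ) n
  refine ⟨h.trans_le (weight_le_self hφ hθ), ?_⟩
  rw [← mul_div_assoc, div_lt_iff₀ hθn, mul_comm (φ k / θ ^ k)]
  exact h.trans_le (weight_le_pow_mul hφ hθ)

end Weight

lemma bddAbove_div_pow_of_limsup_lt {φ : ℕ → ℝ} (hφ : ∀ n, 0 < φ n) {θ : ℝ} (hθ : 0 < θ)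
    (h : limsup (fun n : ℕ => ((log (φ n) / n : ℝ) : EReal)) atTop < (log θ : EReal)) :
    BddAbove (range fun n => φ n / θ ^ n) := by
  refine IsBoundedUnder.bddAbove_range ⟨1, eventually_map.2 ?_⟩
  filter_upwards [eventually_lt_of_limsup_lt h, eventually_ge_atTop 1] with n hn hn1
  have hn0 : (0 : ℝ) < n := by exact_mod_cast hn1
  have hlog : log (φ n) < log (θ ^ n) := by
    rw [log_pow, ← div_lt_iff₀' hn0]; exact_mod_cast hn
  exact (div_le_one (pow_pos hθ n)).2 ((log_lt_log_iff (hφ n) (pow_pos hθ n)).1 hlog).le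

lemma nonpos_of_forall_exists_mul_le {ι : Type*} {S : Set ι} {g : ι → ℝ} {r : ℝ} (hr : 1 < r)
    (hg : BddAbove (g '' S)) (h : ∀ n ∈ S, ∃ m ∈ S, r * g n ≤ g m) : ∀ n ∈ S, g n ≤ 0 := by
  intro n hn
  by_contra! hpos
  obtain ⟨M, hM⟩ := hg
  have hiter : ∀ i : ℕ, r ^ i * g n ≤ M := by
    suffices ∀ i : ℕ, ∃ m ∈ S, r ^ i * g n ≤ g m from fun i =>
      let ⟨m, hm, hle⟩ := this i; hle.trans (hM ⟨m, hm, rfl⟩)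
    intro i
    induction i with
    | zero => exact ⟨n, hn, by simp⟩
    | succ i ih =>
      obtain ⟨m, hm, hle⟩ := ih
      obtain ⟨m', hm', hle'⟩ := h m hm
      exact ⟨m', hm', by rw [pow_succ', mul_assoc]; nlinarith⟩
  obtain ⟨i, hi⟩ := pow_unbounded_of_one_lt (M / g n) hr
  exact (hiter i).not_gt ((div_lt_iff₀ hpos).1 hi)

lemma tendsto_atTop_of_tendsto_div_natCast {φ : ℕ → ℝ} (hφ : ∀ n, 0 < φ n)
    (h : Tendsto (fun n : ℕ => φ n / n) atTop atTop) : Tendsto φ atTop atTop := by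
  refine tendsto_atTop_mono' atTop ?_ h
  filter_upwards [eventually_ge_atTop 1] with n hn
  exact div_le_self (hφ n).le (by exact_mod_cast hn)

lemma frequently_forall_weight_le {φ : ℕ → ℝ} (hφ : ∀ n, 0 < φ n)
    (hφtop : Tendsto φ atTop atTop) {θ : ℝ} (hθ : 1 ≤ θ)
    (hψ : BddAbove (range fun n => φ n / θ ^ n)) {r : ℝ} (hr : 1 < r) :
    ∃ᶠ n in atTop, ∀ k, weight φ θ n k ≤ r * φ n := by
  by_contra hcon
  obtain ⟨N, hN⟩ := eventually_atTop.1 (not_frequently.1 hcon)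
  -- `S` lies in `[N, ∞)` and is closed under increasing `φ`
  let S : Set ℕ := {n | ∀ k ∈ Finset.range N, φ k < φ n}
  have hS : ∀ n ∈ S, ∃ m ∈ S, r * (φ n / θ ^ n) ≤ φ m / θ ^ m := by
    intro n hn
    have hNn : N ≤ n := by by_contra! h; exact (hn n (Finset.mem_range.2 h)).false
    obtain ⟨m, hm⟩ := not_forall.1 (hN n hNn)
    obtain ⟨hφm, hψm⟩ := lt_and_lt_of_mul_lt_weight (hφ m).le hθ (not_le.1 hm)
    refine ⟨m, fun k hk => (hn k hk).trans ?_, hψm.le⟩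
    nlinarith [hφ n]
  obtain ⟨n₀, hn₀⟩ :=
    ((eventually_all_finset _).2 fun k _ => hφtop.eventually_gt_atTop (φ k)).exists
  exact (nonpos_of_forall_exists_mul_le hr (hψ.mono (image_subset_range _ _)) hS n₀ hn₀).not_gt
    (div_pos (hφ n₀) (pow_pos (zero_lt_one.trans_le hθ) n₀))

lemma liminf_eq_of_eventually_le_of_frequently_le {α : Type*} {f : Filter α} {u : α → ℝ} {a : ℝ}
    (hle : ∀ᶠ x in f, a ≤ u x) (hfreq : ∀ η > 0, ∃ᶠ x in f, u x ≤ a + η) : liminf u f = a := by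
  refine le_antisymm (le_of_forall_pos_le_add fun η hη => ?_) ?_
  · exact liminf_le_of_frequently_le (hfreq η hη) ⟨a, hle⟩
  · exact le_liminf_of_le (IsCoboundedUnder.of_frequently_le (hfreq 1 one_pos)) hle

section LogSup

variable {φ : ℕ → ℝ} {θ : ℝ} {j : ℕ}

lemma eq_exp_weight {c : ℕ → ℕ → ℝ} (hc1 : ∀ j k, 1 ≤ k → k ≤ j → c j k = exp (φ k))
    (hc2 : ∀ j k, j + 1 ≤ k → c j k = exp (φ k * θ ^ ((j : ℤ) - (k : ℤ)))) {k : ℕ} (hk : 1 ≤ k) :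
    c j k = exp (weight φ θ j k) := by
  rcases le_or_gt k j with hkj | hjk
  · rw [hc1 j k hk hkj, weight, min_eq_right (by omega), zpow_zero, mul_one]
  · rw [hc2 j k hjk, weight, min_eq_left (by omega)]

lemma bddAbove_range_weight (hφ : ∀ n, 0 ≤ φ n) (hθ : 1 ≤ θ)
    (hψ : BddAbove (range fun n => φ n / θ ^ n)) (j : ℕ) : BddAbove (range (weight φ θ j)) := by
  obtain ⟨M, hM⟩ := hψ
  refine ⟨θ ^ j * M, forall_mem_range.2 fun k => (weight_le_pow_mul (hφ k) hθ).trans ?_⟩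
  exact mul_le_mul_of_nonneg_left (hM ⟨k, rfl⟩) (pow_nonneg (zero_le_one.trans hθ) j)

lemma weight_le_logSup (hbdd : BddAbove (range (weight φ θ j))) {k : ℕ} (hk : 1 ≤ k) :
    weight φ θ j k ≤ logSup φ θ j :=
  le_csSup (hbdd.mono (image_subset_range _ _)) ⟨k, hk, rfl⟩

lemma logSup_le {y : ℝ} (h : ∀ k, 1 ≤ k → weight φ θ j k ≤ y) : logSup φ θ j ≤ y :=
  csSup_le (nonempty_Ici.image _) (forall_mem_image.2 fun _ hk => h _ hk)

lemma self_le_logSup (hbdd : BddAbove (range (weight φ θ j))) (hj : 1 ≤ j) :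
    φ j ≤ logSup φ θ j :=
  (weight_self (φ := φ) (θ := θ) j).symm.le.trans (weight_le_logSup hbdd hj)

lemma logSup_le_logSup_succ (hφ : ∀ n, 0 ≤ φ n) (hθ : 1 ≤ θ)
    (hbdd : BddAbove (range (weight φ θ (j + 1)))) : logSup φ θ j ≤ logSup φ θ (j + 1) :=
  logSup_le fun _ hk => (weight_le_weight_succ (hφ _) hθ).trans (weight_le_logSup hbdd hk)

lemma logSup_succ_le (hφ : ∀ n, 0 ≤ φ n) (hθ : 1 ≤ θ) (hbdd : BddAbove (range (weight φ θ j))) :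
    logSup φ θ (j + 1) ≤ θ * logSup φ θ j :=
  logSup_le fun _ hk => (weight_succ_le (hφ _) hθ).trans
    (mul_le_mul_of_nonneg_left (weight_le_logSup hbdd hk) (zero_le_one.trans hθ))

lemma frequently_logSup_le (hφ : ∀ n, 0 < φ n) (hφtop : Tendsto φ atTop atTop) (hθ : 1 ≤ θ)
    (hψ : BddAbove (range fun n => φ n / θ ^ n)) {r : ℝ} (hr : 1 < r) :
    ∃ᶠ n in atTop, logSup φ θ n ≤ r * φ n :=
  (frequently_forall_weight_le hφ hφtop hθ hψ hr).mono fun _ h => logSup_le fun k _ => h k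

end LogSup

theorem stmt_12 (φ : ℕ → ℝ) (hφpos : ∀ n, 0 < φ n)
    (hφ : Tendsto (fun n : ℕ => φ n / n) atTop atTop)
    (B : ℝ) (hB : 1 ≤ B)
    (hlogB : limsup (fun n : ℕ => ((Real.log (φ n) / n : ℝ) : EReal)) atTop
      = (Real.log B : EReal))
    (ε : ℝ) (hε : 0 < ε)
    (c : ℕ → ℕ → ℝ)
    (hc1 : ∀ j k, 1 ≤ k → k ≤ j → c j k = Real.exp (φ k))
    (hc2 : ∀ j k, j + 1 ≤ k → c j k = Real.exp (φ k * (B + ε) ^ ((j : ℤ) - (k : ℤ))))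
    (L : ℕ → ℝ) (hL : ∀ j, L j = sSup {y | ∃ k, 1 ≤ k ∧ y = c j k}) :
    (∀ j, BddAbove {y | ∃ k, 1 ≤ k ∧ y = c j k}) ∧
    (∀ j, 1 ≤ j → L j ≤ L (j + 1) ∧ L (j + 1) ≤ L j ^ (B + ε)) ∧
    (∀ j, 1 ≤ j → Real.exp (φ j) ≤ L j) ∧
    liminf (fun n : ℕ => Real.log (L n) / φ n) atTop = 1 := by
  have hθ : 1 ≤ B + ε := by linarith
  have hφ0 : ∀ n, 0 ≤ φ n := fun n => (hφpos n).le
  have hψ : BddAbove (range fun n => φ n / (B + ε) ^ n) :=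
    bddAbove_div_pow_of_limsup_lt hφpos (by linarith) <| hlogB ▸ EReal.coe_lt_coe_iff.2
      (log_lt_log (by linarith) (by linarith))
  have hbdd := bddAbove_range_weight hφ0 hθ hψ
  have hset : ∀ j, {y | ∃ k, 1 ≤ k ∧ y = c j k} = exp '' (weight φ (B + ε) j '' Ici 1) := by
    intro j; ext y; constructor
    · rintro ⟨k, hk, rfl⟩; exact ⟨_, ⟨k, hk, rfl⟩, (eq_exp_weight hc1 hc2 hk).symm⟩
    · rintro ⟨_, ⟨k, hk, rfl⟩, rfl⟩; exact ⟨k, hk, (eq_exp_weight hc1 hc2 hk).symm⟩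
  have hLexp : ∀ j, L j = exp (logSup φ (B + ε) j) := fun j => by
    rw [hL, hset, logSup, ← Monotone.map_csSup_of_continuousAt continuous_exp.continuousAt
      exp_monotone (nonempty_Ici.image _) ((hbdd j).mono (image_subset_range _ _))]
  refine ⟨fun j => hset j ▸ ?_, fun j _ => ⟨?_, ?_⟩, fun j hj => ?_, ?_⟩
  · exact exp_monotone.map_bddAbove ((hbdd j).mono (image_subset_range _ _))
  · rw [hLexp, hLexp]; exact exp_le_exp.2 (logSup_le_logSup_succ hφ0 hθ (hbdd _))
  · rw [hLexp, hLexp, ← exp_mul, mul_comm]; exact exp_le_exp.2 (logSup_succ_le hφ0 hθ (hbdd _))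
  · rw [hLexp]; exact exp_le_exp.2 (self_le_logSup (hbdd j) hj)
  · simp only [hLexp, log_exp]
    refine liminf_eq_of_eventually_le_of_frequently_le ?_ fun η hη => ?_
    · filter_upwards [eventually_ge_atTop 1] with n hn
      rw [le_div_iff₀ (hφpos n), one_mul]
      exact self_le_logSup (hbdd n) hn
    · refine (frequently_logSup_le hφpos (tendsto_atTop_of_tendsto_div_natCast hφpos hφ) hθ hψ
        (by linarith : 1 < 1 + η)).mono fun n hn => ?_
      rwa [div_le_iff₀ (hφpos n)]
end

section
/- Let φ : ℕ → (0,∞) satisfy φ(n)/n → ∞ as n → ∞ and limsup_{n→∞} (log φ(n))/n = log B with 1 ≤ B < ∞, let ε > 0, and define L_j = sup_{k≥1} c_{j,k}, where c_{j,k} = exp(φ(k)) for 1 ≤ k ≤ j and c_{j,k} = exp(φ(k)·(B+ε)^{j−k}) for k ≥ j+1. Let m ≥ 0 be an integer and t_0, …, t_m ≥ 0 reals with at least one t_i > 0, and let k = min{ 0 ≤ i ≤ m : t_i ≠ 0 }. Then Z := liminf_{n→∞} log(L_n^{t_0} L_{n+1}^{t_1} ⋯ L_{n+m}^{t_m}) /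 φ(n) satisfies t_k ≤ Z ≤ t_0 + t_1(B+ε) + ⋯ + t_m(B+ε)^m; in particular Z is finite and positive. -/
open Filter

theorem stmt_13 (φ : ℕ → ℝ) (hφpos : ∀ n, 0 < φ n)
    (hφ : Tendsto (fun n : ℕ => φ n / n) atTop atTop)
    (B : ℝ) (hB : 1 ≤ B)
    (hlogB : limsup (fun n : ℕ => ((Real.log (φ n) / n : ℝ) : EReal)) atTop
      = (Real.log B : EReal))
    (ε : ℝ) (hε : 0 < ε)
    (c : ℕ → ℕ → ℝ)
    (hc1 : ∀ j k, 1 ≤ k → k ≤ j → c j k = Real.exp (φ k))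
    (hc2 : ∀ j k, j + 1 ≤ k → c j k = Real.exp (φ k * (B + ε) ^ ((j : ℤ) - (k : ℤ))))
    (L : ℕ → ℝ) (hL : ∀ j, L j = sSup {y | ∃ k, 1 ≤ k ∧ y = c j k})
    (m : ℕ) (t : ℕ → ℝ) (ht : ∀ i ≤ m, 0 ≤ t i) (ht' : ∃ i ≤ m, 0 < t i)
    (k : ℕ) (hkm : k ≤ m) (hk : t k ≠ 0) (hkmin : ∀ i < k, t i = 0)
    (Z : ℝ)
    (hZ : Z = liminf (fun n : ℕ =>
      Real.log (∏ i ∈ Finset.range (m + 1), L (n + i) ^ t i) / φ n) atTop) :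
    t k ≤ Z ∧ Z ≤ ∑ i ∈ Finset.range (m + 1), t i * (B + ε) ^ i := by
  subst hZ
  have hB0 : (0:ℝ) < B := lt_of_lt_of_le one_pos hB
  have hBε1 : (1:ℝ) < B + ε := by linarith
  have hBε0 : (0:ℝ) < B + ε := by linarith
  set θ : ℝ := B + ε / 2 with hθdef
  have hθ1 : (1:ℝ) < θ := by rw [hθdef]; linarith
  have hθ0 : (0:ℝ) < θ := lt_trans one_pos hθ1
  have hθlt : θ < B + ε := by rw [hθdef]; linarith
  -- step 0 : eventually φ k ≤ θ ^ k
  have hlt : Real.log B < Real.log θ := Real.log_lt_log hB0 (by rw [hθdef]; linarith)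
  have hev : ∀ᶠ n : ℕ in atTop,
      ((Real.log (φ n) / n : ℝ) : EReal) < (Real.log θ : EReal) := by
    refine Filter.eventually_lt_of_limsup_lt ?_
    rw [hlogB]
    exact_mod_cast hlt
  obtain ⟨K₀, hK₀⟩ := Filter.eventually_atTop.mp hev
  set K := max K₀ 1 with hKdef
  have hK1 : 1 ≤ K := le_max_right _ _
  have hφθ : ∀ j, K ≤ j → φ j ≤ θ ^ j := by
    intro j hj
    have hj1 : 1 ≤ j := le_trans hK1 hj
    have hj0 : (0:ℝ) < j := by exact_mod_cast hj1
    have h := hK₀ j (le_trans (le_max_left _ _) hj)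
    have h' : Real.log (φ j) / j < Real.log θ := by exact_mod_cast h
    have h'' : Real.log (φ j) < (j : ℝ) * Real.log θ := by
      rw [div_lt_iff₀ hj0] at h'; linarith
    calc φ j = Real.exp (Real.log (φ j)) := (Real.exp_log (hφpos j)).symm
      _ ≤ Real.exp ((j : ℝ) * Real.log θ) := Real.exp_le_exp.mpr h''.le
      _ = θ ^ j := by rw [Real.exp_nat_mul, Real.exp_log hθ0]
  -- rewrite negative zpow as inverse of nat pow
  have hzrw : ∀ j k' : ℕ, j < k' →
      (B + ε) ^ ((j : ℤ) - (k' : ℤ)) = ((B + ε) ^ (k' - j))⁻¹ := by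
    intro j k' h
    rw [← zpow_natCast (B + ε) (k' - j), ← zpow_neg]
    congr 1
    push_cast [Nat.cast_sub h.le]
    ring
  -- boundedness of the sets defining L
  have hbdd : ∀ j, BddAbove {y | ∃ k', 1 ≤ k' ∧ y = c j k'} := by
    intro j
    have hne : (Finset.Icc 1 (max j K)).Nonempty :=
      ⟨1, Finset.mem_Icc.mpr ⟨le_refl 1, le_max_of_le_right hK1⟩⟩
    set F := (Finset.Icc 1 (max j K)).sup' hne φ with hF
    refine ⟨Real.exp (max F ((B + ε) ^ j)), ?_⟩
    rintro y ⟨k', hk'1, rfl⟩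
    by_cases hk' : k' ≤ j
    · rw [hc1 j k' hk'1 hk']
      apply Real.exp_le_exp.mpr
      exact le_max_of_le_left
        (Finset.le_sup' φ (Finset.mem_Icc.mpr ⟨hk'1, le_max_of_le_left hk'⟩))
    · push_neg at hk'
      rw [hc2 j k' hk', hzrw j k' hk']
      apply Real.exp_le_exp.mpr
      have hppos : (0:ℝ) < (B + ε) ^ (k' - j) := pow_pos hBε0 _
      have hinv1 : ((B + ε) ^ (k' - j))⁻¹ ≤ 1 := by
        rw [inv_le_one_iff₀]
        right
        exact one_le_pow₀ hBε1.le
      by_cases hkK : k' ≤ K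
      · refine le_max_of_le_left ?_
        calc φ k' * ((B + ε) ^ (k' - j))⁻¹ ≤ φ k' * 1 :=
              mul_le_mul_of_nonneg_left hinv1 (hφpos k').le
          _ = φ k' := mul_one _
          _ ≤ F := Finset.le_sup' φ (Finset.mem_Icc.mpr ⟨hk'1, le_max_of_le_right hkK⟩)
      · push_neg at hkK
        refine le_max_of_le_right ?_
        have h1 : φ k' ≤ (B + ε) ^ k' :=
          le_trans (hφθ k' hkK.le) (pow_le_pow_left₀ hθ0.le hθlt.le k')
        calc φ k' * ((B + ε) ^ (k' - j))⁻¹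
            ≤ (B + ε) ^ k' * ((B + ε) ^ (k' - j))⁻¹ := by
              apply mul_le_mul_of_nonneg_right h1 (by positivity)
          _ = (B + ε) ^ j := by
              rw [← div_eq_mul_inv, div_eq_iff (ne_of_gt hppos), ← pow_add]
              congr 1
              omega
  have hLge : ∀ j k', 1 ≤ k' → c j k' ≤ L j := by
    intro j k' hk'
    rw [hL]
    exact le_csSup (hbdd j) ⟨k', hk', rfl⟩
  have hL1 : ∀ j, 1 ≤ j → 1 ≤ L j := by
    intro j hj
    have := hLge j 1 le_rfl
    rw [hc1 j 1 le_rfl hj] at this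
    exact le_trans (Real.one_le_exp (hφpos 1).le) this
  have hLpos : ∀ j, 1 ≤ j → 0 < L j := fun j hj => lt_of_lt_of_le one_pos (hL1 j hj)
  -- rewriting the log of the product
  have hflog : ∀ n, 1 ≤ n →
      Real.log (∏ i ∈ Finset.range (m + 1), L (n + i) ^ t i)
        = ∑ i ∈ Finset.range (m + 1), t i * Real.log (L (n + i)) := by
    intro n hn
    rw [Real.log_prod]
    · exact Finset.sum_congr rfl fun i _ =>
        Real.log_rpow (hLpos (n + i) (le_trans hn (Nat.le_add_right n i))) _
    · intro i _
      exact ne_of_gt (Real.rpow_pos_of_pos (hLpos (n + i) (le_trans hn (Nat.le_add_right n i))) _)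
  -- E1 : eventual lower bound
  have hE1 : ∀ n, 1 ≤ n → t k ≤
      Real.log (∏ i ∈ Finset.range (m + 1), L (n + i) ^ t i) / φ n := by
    intro n hn
    rw [hflog n hn, le_div_iff₀ (hφpos n)]
    have hkey : t k * φ n ≤ t k * Real.log (L (n + k)) := by
      apply mul_le_mul_of_nonneg_left _ (ht k hkm)
      have h1 : Real.exp (φ n) ≤ L (n + k) := by
        have := hLge (n + k) n hn
        rwa [hc1 (n + k) n hn (Nat.le_add_right n k)] at this
      calc φ n = Real.log (Real.exp (φ n)) := (Real.log_exp _).symm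
        _ ≤ Real.log (L (n + k)) := Real.log_le_log (Real.exp_pos _) h1
    refine le_trans hkey ?_
    apply Finset.single_le_sum (f := fun i => t i * Real.log (L (n + i)))
    · intro i hi
      have him : i ≤ m := by
        have := Finset.mem_range.mp hi; omega
      exact mul_nonneg (ht i him)
        (Real.log_nonneg (hL1 (n + i) (le_trans hn (Nat.le_add_right n i))))
    · exact Finset.mem_range.mpr (by omega)
  -- E2 : frequently upper bound
  set S := ∑ i ∈ Finset.range (m + 1), t i * (B + ε) ^ i with hS
  set ψ : ℕ → ℝ := fun j => φ j / (B + ε) ^ j with hψ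
  have hψpos : ∀ j, 0 < ψ j := fun j => div_pos (hφpos j) (pow_pos hBε0 j)
  have hE2 : ∀ N : ℕ, ∃ n, N ≤ n ∧
      Real.log (∏ i ∈ Finset.range (m + 1), L (n + i) ^ t i) / φ n ≤ S := by
    intro N
    -- big constant forcing argmax to be late
    have hneC : (Finset.range (N + 1)).Nonempty := ⟨0, Finset.mem_range.mpr (Nat.succ_pos N)⟩
    set C := (Finset.range (N + 1)).sup' hneC φ with hC
    obtain ⟨N₁, hN₁⟩ := Filter.eventually_atTop.mp (hφ.eventually_ge_atTop (C + 1))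
    have hCpos : 0 < C := lt_of_lt_of_le (hφpos 0) (Finset.le_sup' φ (Finset.mem_range.mpr (Nat.succ_pos N)))
    have hbig : ∀ j, max N₁ 1 ≤ j → C < φ j := by
      intro j hj
      have hj1 : 1 ≤ j := le_trans (le_max_right _ _) hj
      have hj0 : (0:ℝ) < j := by exact_mod_cast hj1
      have h := hN₁ j (le_trans (le_max_left _ _) hj)
      rw [le_div_iff₀ hj0] at h
      have hj1' : (1:ℝ) ≤ j := by exact_mod_cast hj1
      nlinarith
    set N' := max (max N₁ K) (max N 1) with hN'
    have hN'1 : 1 ≤ N' := le_trans (le_max_right _ _) (le_max_right _ _)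
    -- geometric decay of ψ on the tail
    set r : ℝ := θ / (B + ε) with hr
    have hr0 : 0 ≤ r := by positivity
    have hr1 : r < 1 := (div_lt_one hBε0).mpr hθlt
    have htend : Tendsto (fun j : ℕ => r ^ j) atTop (nhds 0) :=
      tendsto_pow_atTop_nhds_zero_of_lt_one hr0 hr1
    obtain ⟨M₀, hM₀⟩ := Filter.eventually_atTop.mp (htend.eventually (gt_mem_nhds (hψpos N')))
    set M := max M₀ N' with hM
    have hN'M : N' ≤ M := le_max_right _ _
    -- ψ k < ψ N' for k > M
    have htail : ∀ j, M < j → ψ j < ψ N' := by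
      intro j hj
      have hjK : K ≤ j := by
        have : K ≤ N' := le_trans (le_max_right _ _) (le_max_left _ _)
        omega
      have h1 : ψ j ≤ r ^ j := by
        rw [hψ, hr]
        simp only []
        rw [div_pow]
        gcongr
        exact hφθ j hjK
      exact lt_of_le_of_lt h1 (hM₀ j (by omega))
    -- argmax of ψ on [N', M]
    have hneIcc : (Finset.Icc N' M).Nonempty := ⟨N', Finset.mem_Icc.mpr ⟨le_rfl, hN'M⟩⟩
    obtain ⟨n₀, hn₀mem, hn₀max⟩ := Finset.exists_max_image (Finset.Icc N' M) ψ hneIcc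
    obtain ⟨hn₀l, hn₀r⟩ := Finset.mem_Icc.mp hn₀mem
    have hψn₀ : ∀ j, N' ≤ j → ψ j ≤ ψ n₀ := by
      intro j hj
      by_cases hjM : j ≤ M
      · exact hn₀max j (Finset.mem_Icc.mpr ⟨hj, hjM⟩)
      · exact le_trans (htail j (by omega)).le (hn₀max N' (Finset.mem_Icc.mpr ⟨le_rfl, hN'M⟩))
    -- argmax of φ on [1, n₀]
    have hneI2 : (Finset.Icc 1 n₀).Nonempty := ⟨1, Finset.mem_Icc.mpr ⟨le_rfl, le_trans hN'1 hn₀l⟩⟩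
    obtain ⟨n, hnmem, hnmax⟩ := Finset.exists_max_image (Finset.Icc 1 n₀) φ hneI2
    obtain ⟨hn1, hnn₀⟩ := Finset.mem_Icc.mp hnmem
    have hφmax : ∀ j, 1 ≤ j → j ≤ n₀ → φ j ≤ φ n := fun j h1 h2 =>
      hnmax j (Finset.mem_Icc.mpr ⟨h1, h2⟩)
    -- n is large
    have hnN : N ≤ n := by
      by_contra hcon
      push_neg at hcon
      have h1 : φ n ≤ C := Finset.le_sup' φ (Finset.mem_range.mpr (by omega))
      have h2 : max N₁ 1 ≤ n₀ := le_trans (by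
        have : N₁ ≤ N' := le_trans (le_max_left _ _) (le_max_left _ _)
        have : max N₁ 1 ≤ N' := max_le this hN'1
        exact this) hn₀l
      have h3 : C < φ n₀ := hbig n₀ h2
      have h4 : φ n₀ ≤ φ n := hφmax n₀ (le_trans hN'1 hn₀l) le_rfl
      linarith
    -- ψ-right-record property at n
    have hψn : ∀ j, n ≤ j → ψ j ≤ ψ n := by
      intro j hj
      by_cases hjn₀ : j ≤ n₀
      · rw [hψ]
        exact div_le_div₀ (hφpos n).le (hφmax j (le_trans hn1 hj) hjn₀)
          (pow_pos hBε0 n) (pow_le_pow_right₀ hBε1.le hj)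
      · push_neg at hjn₀
        have h1 : ψ j ≤ ψ n₀ := hψn₀ j (by omega)
        have h2 : ψ n₀ ≤ ψ n := by
          rw [hψ]
          exact div_le_div₀ (hφpos n).le (hφmax n₀ (le_trans hN'1 hn₀l) le_rfl)
            (pow_pos hBε0 n) (pow_le_pow_right₀ hBε1.le hnn₀)
        linarith
    -- consequence: φ j ≤ φ n * (B+ε)^(j-n) for j ≥ n
    have hφb : ∀ j, n ≤ j → φ j ≤ φ n * (B + ε) ^ (j - n) := by
      intro j hj
      have h := hψn j hj
      rw [hψ] at h
      simp only [] at h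
      rw [div_le_div_iff₀ (pow_pos hBε0 j) (pow_pos hBε0 n)] at h
      have hsplit : (B + ε) ^ j = (B + ε) ^ n * (B + ε) ^ (j - n) := by
        rw [← pow_add]; congr 1; omega
      rw [hsplit] at h
      have hpn : (0:ℝ) < (B + ε) ^ n := pow_pos hBε0 n
      nlinarith [pow_pos hBε0 (j - n)]
    -- upper bound on log L (n + i)
    have hLub : ∀ i, i ≤ m → Real.log (L (n + i)) ≤ φ n * (B + ε) ^ i := by
      intro i him
      have hub : L (n + i) ≤ Real.exp (φ n * (B + ε) ^ i) := by
        rw [hL]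
        refine csSup_le ⟨c (n + i) 1, ⟨1, le_rfl, rfl⟩⟩ ?_
        rintro y ⟨k', hk'1, rfl⟩
        by_cases hk' : k' ≤ n + i
        · rw [hc1 (n + i) k' hk'1 hk']
          apply Real.exp_le_exp.mpr
          by_cases hkn : k' ≤ n
          · have h1 : φ k' ≤ φ n := hφmax k' hk'1 (le_trans hkn hnn₀)
            have h2 : (1:ℝ) ≤ (B + ε) ^ i := one_le_pow₀ hBε1.le
            nlinarith [hφpos n]
          · push_neg at hkn
            have h1 : φ k' ≤ φ n * (B + ε) ^ (k' - n) := hφb k' hkn.le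
            have h2 : (B + ε) ^ (k' - n) ≤ (B + ε) ^ i :=
              pow_le_pow_right₀ hBε1.le (by omega)
            nlinarith [hφpos n]
        · push_neg at hk'
          rw [hc2 (n + i) k' hk', hzrw (n + i) k' hk']
          apply Real.exp_le_exp.mpr
          have hd : (0:ℝ) < (B + ε) ^ (k' - (n + i)) := pow_pos hBε0 _
          rw [← div_eq_mul_inv, div_le_iff₀ hd, mul_assoc, ← pow_add]
          have hexp : i + (k' - (n + i)) = k' - n := by omega
          rw [hexp]
          exact hφb k' (by omega)
      have hLp : 0 < L (n + i) := hLpos (n + i) (le_trans hn1 (Nat.le_add_right n i))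
      calc Real.log (L (n + i)) ≤ Real.log (Real.exp (φ n * (B + ε) ^ i)) :=
            Real.log_le_log hLp hub
        _ = φ n * (B + ε) ^ i := Real.log_exp _
    -- assemble
    refine ⟨n, hnN, ?_⟩
    rw [hflog n hn1, div_le_iff₀ (hφpos n)]
    calc ∑ i ∈ Finset.range (m + 1), t i * Real.log (L (n + i))
        ≤ ∑ i ∈ Finset.range (m + 1), t i * (φ n * (B + ε) ^ i) := by
          apply Finset.sum_le_sum
          intro i hi
          have him : i ≤ m := by have := Finset.mem_range.mp hi; omega
          exact mul_le_mul_of_nonneg_left (hLub i him) (ht i him)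
      _ = S * φ n := by
          rw [hS, Finset.sum_mul]
          exact Finset.sum_congr rfl fun i _ => by ring
  -- conclude via liminf = sSup
  rw [Filter.liminf_eq]
  have hmem : t k ∈ {a | ∀ᶠ n in atTop,
      a ≤ Real.log (∏ i ∈ Finset.range (m + 1), L (n + i) ^ t i) / φ n} := by
    exact Filter.eventually_atTop.mpr ⟨1, hE1⟩
  have hub : ∀ a ∈ {a | ∀ᶠ n in atTop,
      a ≤ Real.log (∏ i ∈ Finset.range (m + 1), L (n + i) ^ t i) / φ n}, a ≤ S := by
    intro a ha
    obtain ⟨N₂, h₂⟩ := Filter.eventually_atTop.mp ha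
    obtain ⟨n, hn, hfn⟩ := hE2 N₂
    exact le_trans (h₂ n hn) hfn
  constructor
  · exact le_csSup ⟨S, hub⟩ hmem
  · exact csSup_le ⟨t k, hmem⟩ hub
end

section
/- Let m ≥ 1 be an integer and t_0, …, t_m be reals with 0 < t_0 ≤ t_1 ≤ ⋯ ≤ t_m. Let φ : ℕ → (0,∞) satisfy φ(n)/n → ∞ as n → ∞ and liminf_{n→∞} (log φ(n))/n = log b with 1 ≤ b < ∞, and let ε > 0. Define Φ(n) = min_{k≥n} φ(k) and a sequence {c_n} by: c_1 = ⋯ = c_m = 1, c_{m+1}^{t_m} = exp(Φ(1)), and c_{n+m}^{t_m} = min{ exp(Φ(n)) / (c_n^{t_0} c_{n+1}^{t_1} ⋯ c_{n+m−1}^{t_{m−1}}), (c_1 c_2 ⋯ c_{n+m−1})^{t_m(b+ε−1)} } for n ≥ 2. Then c_n ≥ 1 for all n ≥ 1, and limsup_{n→∞} (log c_{n+1}) / (log(c_1 c_2 ⋯ c_n)) ≤ b + ε − 1. -/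
open Filter

theorem stmt_15 (m : ℕ) (hm : 1 ≤ m) (t : ℕ → ℝ) (ht0 : 0 < t 0)
    (hmono : ∀ i < m, t i ≤ t (i + 1))
    (φ : ℕ → ℝ) (hφpos : ∀ n, 0 < φ n)
    (hφ : Tendsto (fun n : ℕ => φ n / n) atTop atTop)
    (b : ℝ) (hb : 1 ≤ b)
    (hlogb : liminf (fun n : ℕ => ((Real.log (φ n) / n : ℝ) : EReal)) atTop
      = (Real.log b : EReal))
    (ε : ℝ) (hε : 0 < ε)
    (Φ : ℕ → ℝ) (hΦ : ∀ n, IsLeast {y | ∃ k, n ≤ k ∧ y = φ k} (Φ n))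
    (c : ℕ → ℝ)
    (hc1 : ∀ n, 1 ≤ n → n ≤ m → c n = 1)
    (hc2 : c (m + 1) = Real.exp (Φ 1 / t m))
    (hcrec : ∀ n, 2 ≤ n → c (n + m) =
      (min (Real.exp (Φ n) / ∏ i ∈ Finset.range m, c (n + i) ^ t i)
        ((∏ i ∈ Finset.Icc 1 (n + m - 1), c i) ^ (t m * (b + ε - 1)))) ^ (1 / t m)) :
    (∀ n, 1 ≤ n → 1 ≤ c n) ∧
    limsup (fun n : ℕ =>
        ((Real.log (c (n + 1)) / Real.log (∏ i ∈ Finset.Icc 1 n, c i) : ℝ) : EReal)) atTop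
      ≤ ((b + ε - 1 : ℝ) : EReal) := by
  -- monotonicity of t up to m
  have ht' : ∀ j, j ≤ m → ∀ i, i ≤ j → t i ≤ t j := by
    intro j hj
    induction j with
    | zero => intro i hi; simp [Nat.le_zero.mp hi]
    | succ j ih =>
      intro i hi
      rcases Nat.lt_or_ge i (j+1) with h | h
      · exact le_trans (ih (by omega) i (by omega)) (hmono j (by omega))
      · have : i = j + 1 := by omega
        simp [this]
  have htm : 0 < t m := lt_of_lt_of_le ht0 (ht' m le_rfl 0 (Nat.zero_le m))
  have hΦpos : ∀ n, 0 < Φ n := by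
    intro n
    obtain ⟨k, -, hk⟩ := (hΦ n).1
    rw [hk]; exact hφpos k
  have hΦmono : Monotone Φ := by
    intro a bb hab
    obtain ⟨k, hk, hke⟩ := (hΦ bb).1
    exact (hΦ a).2 ⟨k, hab.trans hk, hke⟩
  have hεb : 0 < b + ε - 1 := by linarith
  -- key induction
  have key : ∀ n : ℕ, (∀ k, 1 ≤ k → k ≤ n + m + 1 → 1 ≤ c k) ∧
      ∑ i ∈ Finset.range m, t i * Real.log (c (n + 2 + i)) ≤ Φ (n + 2) := by
    intro n
    induction n with
    | zero =>
      constructor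
      · intro k hk1 hk2
        rcases Nat.lt_or_ge k (m + 1) with h | h
        · rw [hc1 k hk1 (by omega)]
        · have : k = m + 1 := by omega
          rw [this, hc2]
          exact Real.one_le_exp (div_nonneg (hΦpos 1).le htm.le)
      · obtain ⟨m', rfl⟩ : ∃ m', m = m' + 1 := ⟨m - 1, by omega⟩
        rw [Finset.sum_range_succ]
        have h1 : ∑ i ∈ Finset.range m', t i * Real.log (c (0 + 2 + i)) = 0 := by
          apply Finset.sum_eq_zero
          intro i hi
          rw [hc1 (0 + 2 + i) (by omega) (by simp at hi; omega), Real.log_one, mul_zero]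
        have h2 : (0 : ℕ) + 2 + m' = (m' + 1) + 1 := by omega
        rw [h1, h2, hc2, Real.log_exp, zero_add]
        calc t m' * (Φ 1 / t (m' + 1)) ≤ t (m' + 1) * (Φ 1 / t (m' + 1)) := by
              apply mul_le_mul_of_nonneg_right (ht' (m'+1) le_rfl m' (by omega))
              exact div_nonneg (hΦpos 1).le htm.le
          _ = Φ 1 := by field_simp
          _ ≤ Φ 2 := hΦmono (by omega)
    | succ n ih =>
      obtain ⟨hall, hS⟩ := ih
      have hrec := hcrec (n + 2) (by omega)
      have hidx : n + 2 + m - 1 = n + m + 1 := by omega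
      rw [hidx] at hrec
      set S := ∑ i ∈ Finset.range m, t i * Real.log (c (n + 2 + i)) with hSdef
      -- the product equals exp S
      have hprod : ∏ i ∈ Finset.range m, c (n + 2 + i) ^ t i = Real.exp S := by
        rw [hSdef, Real.exp_sum]
        apply Finset.prod_congr rfl
        intro i hi
        have hci : (1:ℝ) ≤ c (n + 2 + i) := hall _ (by omega) (by simp at hi; omega)
        rw [Real.rpow_def_of_pos (by linarith), mul_comm]
      have hP1 : (1:ℝ) ≤ ∏ i ∈ Finset.Icc 1 (n + m + 1), c i := by
        calc (1:ℝ) = ∏ _i ∈ Finset.Icc 1 (n + m + 1), (1:ℝ) := Finset.prod_const_one.symm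
          _ ≤ ∏ i ∈ Finset.Icc 1 (n + m + 1), c i := by
              apply Finset.prod_le_prod (fun i _ => zero_le_one)
              intro i hi
              simp only [Finset.mem_Icc] at hi
              exact hall i hi.1 hi.2
      have hA : Real.exp (Φ (n + 2)) / ∏ i ∈ Finset.range m, c (n + 2 + i) ^ t i
          = Real.exp (Φ (n + 2) - S) := by
        rw [hprod, Real.exp_sub]
      have hA1 : (1:ℝ) ≤ Real.exp (Φ (n + 2) - S) := Real.one_le_exp (by linarith)
      have hB1 : (1:ℝ) ≤ (∏ i ∈ Finset.Icc 1 (n + m + 1), c i) ^ (t m * (b + ε - 1)) :=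
        Real.one_le_rpow hP1 (by positivity)
      rw [hA] at hrec
      have hmin1 : (1:ℝ) ≤ min (Real.exp (Φ (n + 2) - S))
          ((∏ i ∈ Finset.Icc 1 (n + m + 1), c i) ^ (t m * (b + ε - 1))) :=
        le_min hA1 hB1
      have hcnew : 1 ≤ c (n + 2 + m) := by
        rw [hrec]
        exact Real.one_le_rpow hmin1 (by positivity)
      have hall' : ∀ k, 1 ≤ k → k ≤ n + 1 + m + 1 → 1 ≤ c k := by
        intro k hk1 hk2
        rcases Nat.lt_or_ge k (n + m + 2) with h | h
        · exact hall k hk1 (by omega)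
        · have : k = n + 2 + m := by omega
          rw [this]; exact hcnew
      refine ⟨hall', ?_⟩
      -- bound on t m * log c (n+2+m)
      have hlognew : t m * Real.log (c (n + 2 + m)) ≤ Φ (n + 2) - S := by
        rw [hrec, Real.log_rpow (by linarith)]
        have hminpos : (0:ℝ) < min (Real.exp (Φ (n + 2) - S))
            ((∏ i ∈ Finset.Icc 1 (n + m + 1), c i) ^ (t m * (b + ε - 1))) := by linarith
        have : Real.log (min (Real.exp (Φ (n + 2) - S))
            ((∏ i ∈ Finset.Icc 1 (n + m + 1), c i) ^ (t m * (b + ε - 1))))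
            ≤ Φ (n + 2) - S := by
          rw [Real.log_le_iff_le_exp hminpos]
          exact min_le_left _ _
        calc t m * (1 / t m * Real.log _) = Real.log _ := by field_simp
          _ ≤ Φ (n + 2) - S := this
      -- now the sum bound for n+3
      have step1 : ∑ i ∈ Finset.range m, t i * Real.log (c (n + 1 + 2 + i))
          ≤ ∑ i ∈ Finset.range m, t (i + 1) * Real.log (c (n + 2 + (i + 1))) := by
        apply Finset.sum_le_sum
        intro i hi
        simp only [Finset.mem_range] at hi
        have hidx2 : n + 1 + 2 + i = n + 2 + (i + 1) := by omega
        rw [hidx2]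
        have hci : (1:ℝ) ≤ c (n + 2 + (i + 1)) := hall' _ (by omega) (by omega)
        exact mul_le_mul_of_nonneg_right (hmono i hi) (Real.log_nonneg hci)
      have step2 : ∑ i ∈ Finset.range m, t (i + 1) * Real.log (c (n + 2 + (i + 1)))
          = S + t m * Real.log (c (n + 2 + m)) - t 0 * Real.log (c (n + 2)) := by
        have := Finset.sum_range_succ' (fun i => t i * Real.log (c (n + 2 + i))) m
        rw [Finset.sum_range_succ] at this
        simp only [Nat.add_zero] at this
        linarith [this]
      have hlogc0 : 0 ≤ t 0 * Real.log (c (n + 2)) := by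
        apply mul_nonneg ht0.le
        exact Real.log_nonneg (hall _ (by omega) (by omega))
      calc ∑ i ∈ Finset.range m, t i * Real.log (c (n + 1 + 2 + i))
          ≤ S + t m * Real.log (c (n + 2 + m)) - t 0 * Real.log (c (n + 2)) :=
            step1.trans (le_of_eq step2)
        _ ≤ Φ (n + 2) := by linarith
        _ ≤ Φ (n + 1 + 2) := hΦmono (by omega)
  have part1 : ∀ n, 1 ≤ n → 1 ≤ c n := fun n hn => (key n).1 n hn (by omega)
  refine ⟨part1, ?_⟩
  apply Filter.limsup_le_of_le (by isBoundedDefault)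
  filter_upwards [eventually_ge_atTop (m + 1)] with n hn
  rw [EReal.coe_le_coe_iff]
  set P := ∏ i ∈ Finset.Icc 1 n, c i with hPdef
  have hP1 : (1:ℝ) < P := by
    have hmem : m + 1 ∈ Finset.Icc 1 n := by simp; omega
    have h1 : c (m + 1) ≤ P := by
      rw [hPdef, ← Finset.prod_erase_mul _ _ hmem]
      apply le_mul_of_one_le_left (by rw [hc2]; positivity)
      calc (1:ℝ) = ∏ _i ∈ (Finset.Icc 1 n).erase (m+1), (1:ℝ) := Finset.prod_const_one.symm
        _ ≤ _ := by
            apply Finset.prod_le_prod (fun i _ => zero_le_one)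
            intro i hi
            simp only [Finset.mem_erase, Finset.mem_Icc] at hi
            exact part1 i hi.2.1
    have h2 : (1:ℝ) < c (m + 1) := by
      rw [hc2]
      exact Real.one_lt_exp_iff.mpr (div_pos (hΦpos 1) htm)
    linarith
  have hlogP : 0 < Real.log P := Real.log_pos hP1
  -- use the recursion at n + 1 - m
  obtain ⟨k, hk2, hkm⟩ : ∃ k, 2 ≤ k ∧ n + 1 = k + m := ⟨n + 1 - m, by omega, by omega⟩
  have hrec := hcrec k hk2
  have hidx : k + m - 1 = n := by omega
  rw [hidx, ← hPdef, ← hkm] at hrec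
  have hApos : 0 < Real.exp (Φ k) / ∏ i ∈ Finset.range m, c (k + i) ^ t i := by
    apply div_pos (Real.exp_pos _)
    apply Finset.prod_pos
    intro i hi
    exact Real.rpow_pos_of_pos (lt_of_lt_of_le one_pos (part1 _ (by omega))) _
  have hBpos : (0:ℝ) < P ^ (t m * (b + ε - 1)) :=
    Real.rpow_pos_of_pos (by linarith) _
  have hminpos : (0:ℝ) < min (Real.exp (Φ k) / ∏ i ∈ Finset.range m, c (k + i) ^ t i)
      (P ^ (t m * (b + ε - 1))) := lt_min hApos hBpos
  have hlogc : Real.log (c (n + 1)) ≤ (b + ε - 1) * Real.log P := by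
    rw [hrec, Real.log_rpow hminpos]
    have h3 : Real.log (min (Real.exp (Φ k) / ∏ i ∈ Finset.range m, c (k + i) ^ t i)
        (P ^ (t m * (b + ε - 1)))) ≤ Real.log (P ^ (t m * (b + ε - 1))) :=
      Real.log_le_log hminpos (min_le_right _ _)
    rw [Real.log_rpow (by linarith)] at h3
    calc 1 / t m * Real.log _ ≤ 1 / t m * (t m * (b + ε - 1) * Real.log P) := by
          apply mul_le_mul_of_nonneg_left h3 (by positivity)
      _ = (b + ε - 1) * Real.log P := by field_simp
  rw [div_le_iff₀ hlogP]
  exact hlogc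
end

section
/- Let m ≥ 1 be an integer and t_0, …, t_m be reals with 0 < t_0 ≤ t_1 ≤ ⋯ ≤ t_m. Let φ : ℕ → (0,∞) satisfy φ(n)/n → ∞ as n → ∞ and liminf_{n→∞} (log φ(n))/n = log b with 1 ≤ b < ∞, and let ε > 0. Define Φ(n) = min_{k≥n} φ(k) and a sequence {c_n} by: c_1 = ⋯ = c_m = 1, c_{m+1}^{t_m} = exp(Φ(1)), and c_{n+m}^{t_m} = min{ exp(Φ(n)) / (c_n^{t_0} c_{n+1}^{t_1} ⋯ c_{n+m−1}^{t_{m−1}}), (c_1 c_2 ⋯ c_{n+m−1})^{t_m(b+ε−1)} } for n ≥ 2. Then c_{n+m}^{t_m} = exp(φ(n)) / (c_n^{t_0} c_{n+1}^{t_1} ⋯ c_{n+m−1}^{t_{m−1}}) for infinitely many n, and consequently limsup_{n→∞} log(c_n^{t_0} c_{n+1}^{t_1} ⋯ c_{n+m}^{t_m}) / φ(n) = 1. -/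
/-!
Write `A n = ∏_{i<m} c_{n+i}^{t_i}` and `P M = c_1 ⋯ c_M`. Multiplied by `A n`, the recursion reads
`A n · c_{n+m}^{t_m} = min (e^{Φ n}, A n · P_{n+m-1}^{t_m ρ})` with `ρ = b + ε - 1`. Since `t` is
nondecreasing and every `c_j ≥ 1`, `A (n+1) ≤ A n · c_{n+m}^{t_m}`; hence the full window product
never exceeds `e^{Φ n} ≤ e^{φ n}`, which bounds the limsup by `1`.

If the second branch were taken from some point on, `P` would grow like `P_{M+1} = P_M^{1+ρ}`, so
`φ n` would grow like `(b+ε)^n`, against `liminf log φ(n) / n = log b`. Hence the first branch is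
taken infinitely often. When it is taken at `n ≥ m + 2`, every letter of the window is at most
`P_{n+m-1}^ρ`, which forces the first branch again at `n + 1` as long as `Φ` does not change.
Following it up to the index `k ≥ n` with `Φ n = φ k` gives `A k · c_{k+m}^{t_m} = e^{φ k}`.
-/

open Filter Finset Real Topology

noncomputable def windowProd (c t : ℕ → ℝ) (m n : ℕ) : ℝ := ∏ i ∈ range m, c (n + i) ^ t i

noncomputable def partialProd (c : ℕ → ℝ) (M : ℕ) : ℝ := ∏ i ∈ Icc 1 M, c i

lemma pos_of_le_succ {t : ℕ → ℝ} {m : ℕ} (ht0 : 0 < t 0) (hmono : ∀ i < m, t i ≤ t (i + 1)) :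
    ∀ i ≤ m, 0 < t i := by
  intro i hi
  induction i with
  | zero => exact ht0
  | succ i ih => exact (ih (by omega)).trans_le (hmono i (by omega))

lemma monotone_of_forall_isLeast {φ Φ : ℕ → ℝ}
    (hΦ : ∀ n, IsLeast {y | ∃ k, n ≤ k ∧ y = φ k} (Φ n)) : Monotone Φ := by
  intro a b hab
  obtain ⟨k, hbk, hk⟩ := (hΦ b).1
  rw [hk]
  exact (hΦ a).2 ⟨k, hab.trans hbk, rfl⟩

lemma rpow_mul_rpow_le_rpow_mul_rpow {x X s s' : ℝ} (hx : 0 < x) (hxX : x ≤ X) (hs : s ≤ s') :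
    x ^ s' * X ^ s ≤ x ^ s * X ^ s' := by
  have hX := hx.trans_le hxX
  calc x ^ s' * X ^ s = x ^ s * (x ^ (s' - s) * X ^ s) := by
        rw [← mul_assoc, ← rpow_add hx, add_sub_cancel]
    _ ≤ x ^ s * (X ^ (s' - s) * X ^ s) := by
        gcongr
    _ = x ^ s * X ^ s' := by rw [← rpow_add hX, sub_add_cancel]

lemma limsup_eq_of_eventually_le_of_frequently_eq {α β : Type*} [CompleteLattice α] {f : Filter β}
    {u : β → α} {a : α} (hle : ∀ᶠ n in f, u n ≤ a) (heq : ∃ᶠ n in f, u n = a) :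
    limsup u f = a :=
  le_antisymm (limsup_le_of_le (by isBoundedDefault) hle)
    (le_limsup_of_frequently_le (heq.mono fun _ h => h.ge) (by isBoundedDefault))

lemma le_liminf_log_div_of_geometric {φ : ℕ → ℝ} {K a : ℝ} {N : ℕ} (hK : 0 < K) (ha : 0 < a)
    (h : ∀ j, K * a ^ j ≤ φ (N + j)) :
    (log a : EReal) ≤ liminf (fun n : ℕ => ((log (φ n) / n : ℝ) : EReal)) atTop := by
  set C := log K - N * log a
  have hlim : Tendsto (fun n : ℕ => ((log a + C / n : ℝ) : EReal)) atTop (𝓝 (log a)) := by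
    have := (tendsto_const_div_atTop_nhds_zero_nat C).const_add (log a)
    rw [add_zero] at this
    exact EReal.tendsto_coe.2 this
  rw [← hlim.liminf_eq]
  refine liminf_le_liminf (eventually_atTop.2 ⟨N + 1, fun n hn => ?_⟩)
  obtain ⟨j, rfl⟩ := Nat.exists_eq_add_of_le (by omega : N ≤ n)
  have hn0 : (0 : ℝ) < (N + j : ℕ) := by exact_mod_cast (by omega : 0 < N + j)
  have hlog : log K + j * log a ≤ log (φ (N + j)) := by
    rw [← log_pow, ← log_mul hK.ne' (by positivity)]
    exact log_le_log (by positivity) (h j)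
  refine EReal.coe_le_coe_iff.2 ((le_div_iff₀ hn0).2 ?_)
  calc (log a + C / (N + j : ℕ)) * (N + j : ℕ) = log K + j * log a := by
        field_simp
        push_cast
        ring
    _ ≤ _ := hlog

section Products

variable {c t : ℕ → ℝ} {m n : ℕ}

lemma windowProd_succ : windowProd c t (m + 1) n = windowProd c t m n * c (n + m) ^ t m :=
  prod_range_succ _ _

lemma windowProd_pos (hc : ∀ i < m, 0 < c (n + i)) : 0 < windowProd c t m n :=
  prod_pos fun i hi => rpow_pos_of_pos (hc i (mem_range.1 hi)) _

lemma one_le_windowProd (hc : ∀ i < m, 1 ≤ c (n + i)) (ht : ∀ i < m, 0 ≤ t i) :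
    1 ≤ windowProd c t m n :=
  one_le_prod fun i hi => one_le_rpow (hc i (mem_range.1 hi)) (ht i (mem_range.1 hi))

lemma windowProd_shift_le (hc : ∀ i ≤ m, 1 ≤ c (n + i)) (ht0 : 0 ≤ t 0)
    (hmono : ∀ i < m, t i ≤ t (i + 1)) :
    windowProd c t m (n + 1) ≤ windowProd c t (m + 1) n := by
  induction m with
  | zero => simpa [windowProd] using one_le_rpow (hc 0 le_rfl) ht0
  | succ m ih =>
    have hcm := hc (m + 1) le_rfl
    rw [windowProd_succ, windowProd_succ (m := m + 1), Nat.add_right_comm n 1 m]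
    exact mul_le_mul (ih (fun i hi => hc i (by omega)) fun i hi => hmono i (by omega))
      (rpow_le_rpow_of_exponent_le hcm (hmono m (by omega))) (by positivity)
      (windowProd_pos fun i _ => zero_lt_one.trans_le (hc i (by omega))).le

/-- The ratio of a window to its shift is `c_n^{t_0} ∏_{i<m} c_{n+1+i}^{t_{i+1} - t_i}`, whose
exponents add up to `t_m`. -/
lemma windowProd_le_shift_mul_rpow {X : ℝ} (hc : ∀ i ≤ m, 0 < c (n + i))
    (hX : ∀ i ≤ m, c (n + i) ≤ X) (ht0 : 0 ≤ t 0) (hmono : ∀ i < m, t i ≤ t (i + 1)) :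
    windowProd c t (m + 1) n ≤ windowProd c t m (n + 1) * X ^ t m := by
  induction m with
  | zero => simpa [windowProd] using rpow_le_rpow (hc 0 le_rfl).le (hX 0 le_rfl) ht0
  | succ m ih =>
    have ih' := ih (fun i hi => hc i (by omega)) (fun i hi => hX i (by omega))
      (fun i hi => hmono i (by omega))
    have hA : 0 < windowProd c t m (n + 1) :=
      windowProd_pos fun i _ => by simpa only [add_assoc] using hc (1 + i) (by omega)
    rw [windowProd_succ, windowProd_succ (n := n + 1), Nat.add_right_comm n 1 m, ← add_assoc]
    calc windowProd c t (m + 1) n * c (n + m + 1) ^ t (m + 1)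
        ≤ windowProd c t m (n + 1) * X ^ t m * c (n + m + 1) ^ t (m + 1) :=
          mul_le_mul_of_nonneg_right ih' (rpow_nonneg (hc (m + 1) le_rfl).le _)
      _ = windowProd c t m (n + 1) * (c (n + m + 1) ^ t (m + 1) * X ^ t m) := by ring
      _ ≤ windowProd c t m (n + 1) * (c (n + m + 1) ^ t m * X ^ t (m + 1)) := by
          refine mul_le_mul_of_nonneg_left ?_ hA.le
          exact rpow_mul_rpow_le_rpow_mul_rpow (hc (m + 1) le_rfl) (hX (m + 1) le_rfl)
            (hmono m (by omega))
      _ = _ := by ring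

lemma partialProd_succ (M : ℕ) : partialProd c (M + 1) = partialProd c M * c (M + 1) :=
  prod_Icc_succ_top (by omega) _

lemma one_le_partialProd {M : ℕ} (hc : ∀ j, 1 ≤ j → j ≤ M → 1 ≤ c j) : 1 ≤ partialProd c M :=
  one_le_prod fun j hj => hc j (mem_Icc.1 hj).1 (mem_Icc.1 hj).2

lemma partialProd_mono (hc : ∀ j, 1 ≤ j → 1 ≤ c j) : Monotone (partialProd c) :=
  monotone_nat_of_le_succ fun M => by
    rw [partialProd_succ]
    exact le_mul_of_one_le_right (zero_le_one.trans (one_le_partialProd fun j hj _ => hc j hj))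
      (hc _ (by omega))

lemma le_partialProd (hc : ∀ j, 1 ≤ j → 1 ≤ c j) {j M : ℕ} (hj : 1 ≤ j) (hjM : j ≤ M) :
    c j ≤ partialProd c M := by
  obtain ⟨i, rfl⟩ := Nat.exists_eq_add_of_le' hj
  refine le_trans ?_ (partialProd_mono hc hjM)
  rw [partialProd_succ]
  exact le_mul_of_one_le_left (zero_le_one.trans (hc _ hj))
    (one_le_partialProd fun j hj _ => hc j hj)

end Products

section Recursion

variable {c t Φ : ℕ → ℝ} {m n : ℕ} {ρ : ℝ}

lemma one_le_and_windowProd_le_exp (ht : ∀ i ≤ m, 0 < t i) (hmono : ∀ i < m, t i ≤ t (i + 1))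
    (hρ : 0 ≤ ρ) (hΦ : Monotone Φ) (hΦ1 : 0 ≤ Φ 1)
    (hc1 : ∀ n, 1 ≤ n → n ≤ m → c n = 1) (hc2 : c (m + 1) = exp (Φ 1 / t m))
    (hcrec : ∀ n, 2 ≤ n → c (n + m) =
      (min (exp (Φ n) / windowProd c t m n) (partialProd c (n + m - 1) ^ (t m * ρ))) ^ (1 / t m)) :
    ∀ n, 1 ≤ n → (∀ j, 1 ≤ j → j ≤ n + m → 1 ≤ c j) ∧ windowProd c t (m + 1) n ≤ exp (Φ n) := by
  have htm := ht m le_rfl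
  intro n hn
  induction n, hn using Nat.le_induction with
  | base =>
    have hA : windowProd c t m 1 = 1 :=
      prod_eq_one fun i hi => by
        rw [hc1 (1 + i) (by omega) (by simp only [mem_range] at hi; omega), one_rpow]
    refine ⟨fun j hj1 hj2 => ?_, ?_⟩
    · rcases (show j ≤ m ∨ j = m + 1 by omega) with hj | rfl
      · exact (hc1 j hj1 hj).ge
      · rw [hc2]
        exact one_le_exp (by positivity)
    · rw [windowProd_succ, hA, one_mul, add_comm 1 m, hc2, ← exp_mul, div_mul_cancel₀ _ htm.ne']
  | succ n hn ih =>
    obtain ⟨hc, hW⟩ := ih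
    have hA1 : 1 ≤ windowProd c t m (n + 1) :=
      one_le_windowProd (fun i _ => hc _ (by omega) (by omega)) fun i hi => (ht i hi.le).le
    have hApos := zero_lt_one.trans_le hA1
    have hA : windowProd c t m (n + 1) ≤ exp (Φ (n + 1)) :=
      (windowProd_shift_le (fun i _ => hc _ (by omega) (by omega)) (ht 0 (by omega)).le hmono).trans
        (hW.trans (exp_le_exp.2 (hΦ n.le_succ)))
    have hF : 1 ≤ exp (Φ (n + 1)) / windowProd c t m (n + 1) := (one_le_div hApos).2 hA
    have hB : 1 ≤ partialProd c (n + 1 + m - 1) ^ (t m * ρ) :=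
      one_le_rpow (one_le_partialProd fun j hj1 hj2 => hc j hj1 (by omega)) (by positivity)
    have hmin := le_min hF hB
    refine ⟨fun j hj1 hj2 => ?_, ?_⟩
    · rcases (show j ≤ n + m ∨ j = n + 1 + m by omega) with hj | rfl
      · exact hc j hj1 hj
      · rw [hcrec (n + 1) (by omega)]
        exact one_le_rpow hmin (by positivity)
    · rw [windowProd_succ, hcrec (n + 1) (by omega), one_div,
        rpow_inv_rpow (zero_le_one.trans hmin) htm.ne']
      calc _ ≤ windowProd c t m (n + 1) * (exp (Φ (n + 1)) / windowProd c t m (n + 1)) :=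
            mul_le_mul_of_nonneg_left (min_le_left _ _) hApos.le
        _ = _ := mul_div_cancel₀ _ hApos.ne'

lemma windowProd_succ_eq_min (htm : 0 < t m) (hc : ∀ j, 1 ≤ j → 1 ≤ c j)
    (hcrec : ∀ n, 2 ≤ n → c (n + m) =
      (min (exp (Φ n) / windowProd c t m n) (partialProd c (n + m - 1) ^ (t m * ρ))) ^ (1 / t m))
    (hn : 2 ≤ n) :
    windowProd c t (m + 1) n =
      min (exp (Φ n)) (windowProd c t m n * partialProd c (n + m - 1) ^ (t m * ρ)) := by
  have hA : 0 < windowProd c t m n :=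
    windowProd_pos fun i _ => zero_lt_one.trans_le (hc _ (by omega))
  have hB : 0 ≤ partialProd c (n + m - 1) ^ (t m * ρ) :=
    rpow_nonneg (zero_le_one.trans (one_le_partialProd fun j hj _ => hc j hj)) _
  rw [windowProd_succ, hcrec n hn, one_div, rpow_inv_rpow (le_min (by positivity) hB) htm.ne',
    mul_min_of_nonneg _ _ hA.le, mul_div_cancel₀ _ hA.ne']

lemma le_partialProd_rpow (htm : 0 < t m) (hc : ∀ j, 1 ≤ j → 1 ≤ c j)
    (hcrec : ∀ n, 2 ≤ n → c (n + m) =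
      (min (exp (Φ n) / windowProd c t m n) (partialProd c (n + m - 1) ^ (t m * ρ))) ^ (1 / t m))
    (hn : 2 ≤ n) : c (n + m) ≤ partialProd c (n + m - 1) ^ ρ := by
  have hA : 0 < windowProd c t m n :=
    windowProd_pos fun i _ => zero_lt_one.trans_le (hc _ (by omega))
  have hP : 0 ≤ partialProd c (n + m - 1) :=
    zero_le_one.trans (one_le_partialProd fun j hj _ => hc j hj)
  rw [hcrec n hn]
  calc _ ≤ (partialProd c (n + m - 1) ^ (t m * ρ)) ^ (1 / t m) :=
        rpow_le_rpow (le_min (by positivity) (rpow_nonneg hP _)) (min_le_right _ _)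
          (by positivity)
    _ = _ := by
        rw [← rpow_mul hP]
        field_simp

lemma le_partialProd_rpow_of_le (hρ : 0 ≤ ρ) (htm : 0 < t m) (hc : ∀ j, 1 ≤ j → 1 ≤ c j)
    (hcrec : ∀ n, 2 ≤ n → c (n + m) =
      (min (exp (Φ n) / windowProd c t m n) (partialProd c (n + m - 1) ^ (t m * ρ))) ^ (1 / t m))
    (hn : m + 2 ≤ n) {i : ℕ} (hi : i ≤ m) : c (n + i) ≤ partialProd c (n + m - 1) ^ ρ := by
  have h := le_partialProd_rpow htm hc hcrec (n := n - m + i) (by omega)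
  rw [show n - m + i + m = n + i by omega] at h
  exact h.trans (rpow_le_rpow (zero_le_one.trans (one_le_partialProd fun j hj _ => hc j hj))
    (partialProd_mono hc (by omega)) hρ)

/-- The first branch of the recursion, once taken at `n ≥ m + 2`, is taken again at `n + 1`
unless `Φ` increases. -/
lemma exp_le_windowProd_mul_succ (ht : ∀ i ≤ m, 0 < t i) (hmono : ∀ i < m, t i ≤ t (i + 1))
    (hρ : 0 ≤ ρ) (hc : ∀ j, 1 ≤ j → 1 ≤ c j)
    (hcrec : ∀ n, 2 ≤ n → c (n + m) =
      (min (exp (Φ n) / windowProd c t m n) (partialProd c (n + m - 1) ^ (t m * ρ))) ^ (1 / t m))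
    (hn : m + 2 ≤ n) (hΦn : Φ (n + 1) = Φ n)
    (hfirst : exp (Φ n) ≤ windowProd c t m n * partialProd c (n + m - 1) ^ (t m * ρ)) :
    exp (Φ (n + 1)) ≤ windowProd c t m (n + 1) * partialProd c (n + 1 + m - 1) ^ (t m * ρ) := by
  have htm := ht m le_rfl
  have hP : 0 ≤ partialProd c (n + m - 1) :=
    zero_le_one.trans (one_le_partialProd fun j hj _ => hc j hj)
  have hA : 0 < windowProd c t m (n + 1) :=
    windowProd_pos fun i _ => zero_lt_one.trans_le (hc _ (by omega))
  calc exp (Φ (n + 1)) = windowProd c t (m + 1) n := by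
        rw [hΦn, windowProd_succ_eq_min htm hc hcrec (by omega), min_eq_left hfirst]
    _ ≤ windowProd c t m (n + 1) * (partialProd c (n + m - 1) ^ ρ) ^ t m :=
        windowProd_le_shift_mul_rpow (fun i _ => zero_lt_one.trans_le (hc _ (by omega)))
          (fun i hi => le_partialProd_rpow_of_le hρ htm hc hcrec hn hi) (ht 0 (by omega)).le hmono
    _ ≤ windowProd c t m (n + 1) * partialProd c (n + 1 + m - 1) ^ (t m * ρ) := by
        rw [← rpow_mul hP, mul_comm ρ]
        exact mul_le_mul_of_nonneg_left
          (rpow_le_rpow hP (partialProd_mono hc (by omega)) (by positivity)) hA.le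

lemma log_partialProd_eq_geometric (htm : 0 < t m) (hc : ∀ j, 1 ≤ j → 1 ≤ c j) {N : ℕ}
    (hN : 1 ≤ N) (hsecond : ∀ n ≥ N, c (n + m) ^ t m = partialProd c (n + m - 1) ^ (t m * ρ))
    (j : ℕ) :
    log (partialProd c (N + j + m - 1)) = (1 + ρ) ^ j * log (partialProd c (N + m - 1)) := by
  have hP : ∀ M, 0 < partialProd c M :=
    fun M => zero_lt_one.trans_le (one_le_partialProd fun j hj _ => hc j hj)
  induction j with
  | zero => simp
  | succ j ih =>
    have hcj : log (c (N + j + m)) = ρ * log (partialProd c (N + j + m - 1)) := by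
      have h := congrArg log (hsecond (N + j) (by omega))
      rw [log_rpow (zero_lt_one.trans_le (hc _ (by omega))), log_rpow (hP _)] at h
      exact mul_left_cancel₀ htm.ne' (by rw [h]; ring)
    rw [show N + (j + 1) + m - 1 = N + j + m - 1 + 1 by omega, partialProd_succ,
      log_mul (hP _).ne' (zero_lt_one.trans_le (hc _ (by omega))).ne',
      show N + j + m - 1 + 1 = N + j + m by omega, hcj, ih]
    ring

/-- If the second branch were taken from `N` on, `log P` would grow geometrically with ratio
`1 + ρ`, and so would `φ`. -/
lemma frequently_exp_le_windowProd_mul {φ : ℕ → ℝ} (ht : ∀ i ≤ m, 0 < t i) (hρ : 0 < ρ)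
    (hΦφ : ∀ n, Φ n ≤ φ n) (hc : ∀ j, 1 ≤ j → 1 ≤ c j) (hcm : 1 < c (m + 1))
    (hcrec : ∀ n, 2 ≤ n → c (n + m) =
      (min (exp (Φ n) / windowProd c t m n) (partialProd c (n + m - 1) ^ (t m * ρ))) ^ (1 / t m))
    (hlim : liminf (fun n : ℕ => ((log (φ n) / n : ℝ) : EReal)) atTop < (log (1 + ρ) : EReal)) :
    ∃ᶠ n in atTop, exp (Φ n) ≤ windowProd c t m n * partialProd c (n + m - 1) ^ (t m * ρ) := by
  have htm := ht m le_rfl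
  have hA : ∀ n, 1 ≤ n → 1 ≤ windowProd c t m n :=
    fun n hn => one_le_windowProd (fun i _ => hc _ (by omega)) fun i hi => (ht i hi.le).le
  have hP : ∀ M, 1 ≤ partialProd c M := fun M => one_le_partialProd fun j hj _ => hc j hj
  by_contra hnot
  obtain ⟨N, hN⟩ := eventually_atTop.1 ((not_frequently.1 hnot).and (eventually_ge_atTop 2))
  simp only [not_le] at hN
  have hN2 := (hN N le_rfl).2
  have hsecond : ∀ n ≥ N, c (n + m) ^ t m = partialProd c (n + m - 1) ^ (t m * ρ) := by
    intro n hn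
    have h := windowProd_succ_eq_min htm hc hcrec (hN n hn).2
    rw [min_eq_right (hN n hn).1.le, windowProd_succ] at h
    exact mul_left_cancel₀ (zero_lt_one.trans_le (hA n (by omega))).ne' h
  have hK : 0 < t m * ρ * log (partialProd c (N + m - 1)) :=
    mul_pos (mul_pos htm hρ)
      (log_pos (hcm.trans_le (le_partialProd hc (by omega) (by omega))))
  refine hlim.not_ge (le_liminf_log_div_of_geometric (N := N) hK (by linarith) fun j => ?_)
  have hNj := hN (N + j) (by omega)
  calc t m * ρ * log (partialProd c (N + m - 1)) * (1 + ρ) ^ j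
      = log (partialProd c (N + j + m - 1) ^ (t m * ρ)) := by
        rw [log_rpow (zero_lt_one.trans_le (hP _)),
          log_partialProd_eq_geometric htm hc (by omega) hsecond]
        ring
    _ ≤ log (windowProd c t m (N + j) * partialProd c (N + j + m - 1) ^ (t m * ρ)) :=
        log_le_log (rpow_pos_of_pos (zero_lt_one.trans_le (hP _)) _)
          (le_mul_of_one_le_left (rpow_nonneg (zero_le_one.trans (hP _)) _) (hA _ (by omega)))
    _ ≤ Φ (N + j) := (log_le_iff_le_exp (mul_pos (zero_lt_one.trans_le (hA _ (by omega)))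
          (rpow_pos_of_pos (zero_lt_one.trans_le (hP _)) _))).2 hNj.1.le
    _ ≤ φ (N + j) := hΦφ _

lemma frequently_windowProd_eq_exp {φ : ℕ → ℝ} (ht : ∀ i ≤ m, 0 < t i)
    (hmono : ∀ i < m, t i ≤ t (i + 1)) (hρ : 0 ≤ ρ)
    (hΦ : ∀ n, IsLeast {y | ∃ k, n ≤ k ∧ y = φ k} (Φ n)) (hc : ∀ j, 1 ≤ j → 1 ≤ c j)
    (hcrec : ∀ n, 2 ≤ n → c (n + m) =
      (min (exp (Φ n) / windowProd c t m n) (partialProd c (n + m - 1) ^ (t m * ρ))) ^ (1 / t m))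
    (hfreq : ∃ᶠ n in atTop,
      exp (Φ n) ≤ windowProd c t m n * partialProd c (n + m - 1) ^ (t m * ρ)) :
    ∃ᶠ n in atTop, windowProd c t (m + 1) n = exp (φ n) := by
  rw [frequently_atTop] at hfreq ⊢
  intro N
  obtain ⟨f, hf, hfirst⟩ := hfreq (max N (m + 2))
  obtain ⟨k, hfk, hk⟩ := (hΦ f).1
  have hΦmono := monotone_of_forall_isLeast hΦ
  have hconst : ∀ j, f ≤ j → j ≤ k → Φ j = Φ f := fun j h1 h2 =>
    le_antisymm (((hΦmono h2).trans ((hΦ k).2 ⟨k, le_rfl, rfl⟩)).trans hk.ge) (hΦmono h1)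
  have hfirst' : ∀ j, f ≤ j → j ≤ k →
      exp (Φ j) ≤ windowProd c t m j * partialProd c (j + m - 1) ^ (t m * ρ) := by
    intro j hj
    induction j, hj using Nat.le_induction with
    | base => exact fun _ => hfirst
    | succ j hj ih =>
      exact fun hjk => exp_le_windowProd_mul_succ ht hmono hρ hc hcrec (by omega)
        (by rw [hconst (j + 1) (by omega) hjk, hconst j hj (by omega)]) (ih (by omega))
  refine ⟨k, by omega, ?_⟩
  rw [windowProd_succ_eq_min (ht m le_rfl) hc hcrec (by omega), min_eq_left (hfirst' k hfk le_rfl),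
    hconst k hfk le_rfl, hk]

end Recursion

theorem stmt_16_general (m : ℕ) (t : ℕ → ℝ) (ht0 : 0 < t 0)
    (hmono : ∀ i < m, t i ≤ t (i + 1))
    (φ : ℕ → ℝ) (hφpos : ∀ n, 0 < φ n)
    (b : ℝ) (hb : 1 ≤ b)
    (hlogb : liminf (fun n : ℕ => ((Real.log (φ n) / n : ℝ) : EReal)) atTop
      = (Real.log b : EReal))
    (ε : ℝ) (hε : 0 < ε)
    (Φ : ℕ → ℝ) (hΦ : ∀ n, IsLeast {y | ∃ k, n ≤ k ∧ y = φ k} (Φ n))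
    (c : ℕ → ℝ)
    (hc1 : ∀ n, 1 ≤ n → n ≤ m → c n = 1)
    (hc2 : c (m + 1) = Real.exp (Φ 1 / t m))
    (hcrec : ∀ n, 2 ≤ n → c (n + m) =
      (min (Real.exp (Φ n) / ∏ i ∈ Finset.range m, c (n + i) ^ t i)
        ((∏ i ∈ Finset.Icc 1 (n + m - 1), c i) ^ (t m * (b + ε - 1)))) ^ (1 / t m)) :
    (∃ᶠ n : ℕ in atTop,
      c (n + m) ^ t m = Real.exp (φ n) / ∏ i ∈ Finset.range m, c (n + i) ^ t i) ∧
    limsup (fun n : ℕ =>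
        ((Real.log (∏ i ∈ Finset.range (m + 1), c (n + i) ^ t i) / φ n : ℝ) : EReal)) atTop
      = 1 := by
  have ht := pos_of_le_succ ht0 hmono
  have hρ : 0 < b + ε - 1 := by linarith
  have hΦφ : ∀ n, Φ n ≤ φ n := fun n => (hΦ n).2 ⟨n, le_rfl, rfl⟩
  have hΦ1 : 0 < Φ 1 := by
    obtain ⟨k, -, hk⟩ := (hΦ 1).1
    exact hk ▸ hφpos k
  have hbound := one_le_and_windowProd_le_exp ht hmono hρ.le (monotone_of_forall_isLeast hΦ)
    hΦ1.le hc1 hc2 hcrec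
  have hc : ∀ j, 1 ≤ j → 1 ≤ c j := fun j hj => (hbound j hj).1 j hj (by omega)
  have hcm : 1 < c (m + 1) := by
    rw [hc2]
    exact one_lt_exp_iff.2 (div_pos hΦ1 (ht m le_rfl))
  have hlim : liminf (fun n : ℕ => ((log (φ n) / n : ℝ) : EReal)) atTop
      < (log (1 + (b + ε - 1)) : EReal) := by
    rw [hlogb, add_sub_cancel]
    exact EReal.coe_lt_coe_iff.2 (log_lt_log (by linarith) (by linarith))
  have hfreq := (frequently_windowProd_eq_exp ht hmono hρ.le hΦ hc hcrec
    (frequently_exp_le_windowProd_mul ht hρ hΦφ hc hcm hcrec hlim)).and_eventually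
    (eventually_ge_atTop 1)
  have hpos : ∀ k, ∀ n, 1 ≤ n → 0 < windowProd c t k n :=
    fun k n hn => windowProd_pos fun i _ => zero_lt_one.trans_le (hc _ (by omega))
  refine ⟨hfreq.mono fun n ⟨h, hn⟩ => ?_,
    limsup_eq_of_eventually_le_of_frequently_eq ?_ (hfreq.mono fun n ⟨h, _⟩ => ?_)⟩
  · change c (n + m) ^ t m = exp (φ n) / windowProd c t m n
    rw [eq_div_iff (hpos m n hn).ne', mul_comm, ← windowProd_succ, h]
  · filter_upwards [eventually_ge_atTop 1] with n hn
    exact_mod_cast (div_le_one (hφpos n)).2 ((log_le_iff_le_exp (hpos (m + 1) n hn)).2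
      ((hbound n hn).2.trans (exp_le_exp.2 (hΦφ n))))
  · change ((log (windowProd c t (m + 1) n) / φ n : ℝ) : EReal) = 1
    rw [h, log_exp, div_self (hφpos n).ne']
    rfl

theorem stmt_16 (m : ℕ) (hm : 1 ≤ m) (t : ℕ → ℝ) (ht0 : 0 < t 0)
    (hmono : ∀ i < m, t i ≤ t (i + 1))
    (φ : ℕ → ℝ) (hφpos : ∀ n, 0 < φ n)
    (hφ : Tendsto (fun n : ℕ => φ n / n) atTop atTop)
    (b : ℝ) (hb : 1 ≤ b)
    (hlogb : liminf (fun n : ℕ => ((Real.log (φ n) / n : ℝ) : EReal)) atTop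
      = (Real.log b : EReal))
    (ε : ℝ) (hε : 0 < ε)
    (Φ : ℕ → ℝ) (hΦ : ∀ n, IsLeast {y | ∃ k, n ≤ k ∧ y = φ k} (Φ n))
    (c : ℕ → ℝ)
    (hc1 : ∀ n, 1 ≤ n → n ≤ m → c n = 1)
    (hc2 : c (m + 1) = Real.exp (Φ 1 / t m))
    (hcrec : ∀ n, 2 ≤ n → c (n + m) =
      (min (Real.exp (Φ n) / ∏ i ∈ Finset.range m, c (n + i) ^ t i)
        ((∏ i ∈ Finset.Icc 1 (n + m - 1), c i) ^ (t m * (b + ε - 1)))) ^ (1 / t m)) :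
    (∃ᶠ n : ℕ in atTop,
      c (n + m) ^ t m = Real.exp (φ n) / ∏ i ∈ Finset.range m, c (n + i) ^ t i) ∧
    limsup (fun n : ℕ =>
        ((Real.log (∏ i ∈ Finset.range (m + 1), c (n + i) ^ t i) / φ n : ℝ) : EReal)) atTop
      = 1 :=
  stmt_16_general m t ht0 hmono φ hφpos b hb hlogb ε hε Φ hΦ c hc1 hc2 hcrec
end
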